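/- The dual space H* of a finite quantum groupoid H is itself a finite quantum groupoid, with product ⟨φψ, h⟩ = ⟨φ⊗ψ, Δ(h)⟩, coproduct ⟨Δ̂(φ), h⊗g⟩ = ⟨φ, hg⟩, unit ε, counit φ ↦ φ(1), and antipode ⟨Ŝ(φ), h⟩ = ⟨φ, S(h)⟩. -/

import Mathlib

/-!
Every axiom for `H*` is the transpose of an axiom for `H` under the pairings
`(H*)^{⊗n} × H^{⊗n} → k` (`TensorProduct.dualDistrib` and its iterates), which are injective
because `H` is finite-dimensional. Transposition exchanges associativity with coassociativity,
the unit axioms with the counit axioms, and the two axioms on `(Δ ⊗ id)Δ(1)` with the two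
axioms on `ε(abc)`; multiplicativity of `Δ` and the three antipode axioms are self-dual. So
each identity in `(H*)^{⊗n}` is checked by pairing both sides with pure tensors of `H` and
invoking the corresponding axiom of `H`.
-/

open TensorProduct

/-- The structure maps of a (candidate) quantum groupoid on a `k`-vector space `V`. -/
structure QGData (k V : Type*) [Field k] [AddCommGroup V] [Module k V] where
  mul : V ⊗[k] V →ₗ[k] V
  one : V
  comul : V →ₗ[k] V ⊗[k] V
  counit : V →ₗ[k] k
  antipode : V →ₗ[k] V

namespace QGData

variable {k V : Type*} [Field k] [AddCommGroup V] [Module k V]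

/-- The induced multiplication on `V ⊗ V`. -/
noncomputable def mul2 (D : QGData k V) : (V ⊗[k] V) ⊗[k] (V ⊗[k] V) →ₗ[k] V ⊗[k] V :=
  (TensorProduct.map D.mul D.mul) ∘ₗ (TensorProduct.tensorTensorTensorComm k V V V V).toLinearMap

/-- The induced multiplication on `(V ⊗ V) ⊗ V`. -/
noncomputable def mul3 (D : QGData k V) :
    ((V ⊗[k] V) ⊗[k] V) ⊗[k] ((V ⊗[k] V) ⊗[k] V) →ₗ[k] (V ⊗[k] V) ⊗[k] V :=
  (TensorProduct.map D.mul2 D.mul) ∘ₗ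
    (TensorProduct.tensorTensorTensorComm k (V ⊗[k] V) V (V ⊗[k] V) V).toLinearMap

/-- The axioms of a finite quantum groupoid (weak Hopf algebra). -/
structure IsQG (D : QGData k V) : Prop where
  mul_assoc : ∀ x y z : V, D.mul (D.mul (x ⊗ₜ[k] y) ⊗ₜ[k] z) = D.mul (x ⊗ₜ[k] D.mul (y ⊗ₜ[k] z))
  one_mul : ∀ x : V, D.mul (D.one ⊗ₜ[k] x) = x
  mul_one : ∀ x : V, D.mul (x ⊗ₜ[k] D.one) = x
  coassoc : (TensorProduct.assoc k V V V).toLinearMap ∘ₗ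
      (TensorProduct.map D.comul LinearMap.id) ∘ₗ D.comul
      = (TensorProduct.map LinearMap.id D.comul) ∘ₗ D.comul
  counit_comul : ∀ x : V,
    (TensorProduct.lid k V) ((TensorProduct.map D.counit LinearMap.id) (D.comul x)) = x
  comul_counit : ∀ x : V,
    (TensorProduct.rid k V) ((TensorProduct.map LinearMap.id D.counit) (D.comul x)) = x
  /-- `Δ(xy) = Δ(x)Δ(y)` -/
  comul_mul : ∀ x y : V,
    D.comul (D.mul (x ⊗ₜ[k] y)) = D.mul2 (D.comul x ⊗ₜ[k] D.comul y)
  /-- `(Δ⊗id)Δ(1) = (Δ(1)⊗1)(1⊗Δ(1))` -/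
  weak_comul_one₁ :
    (TensorProduct.map D.comul LinearMap.id) (D.comul D.one)
      = D.mul3 ((D.comul D.one ⊗ₜ[k] D.one) ⊗ₜ[k]
          ((TensorProduct.assoc k V V V).symm (D.one ⊗ₜ[k] D.comul D.one)))
  /-- `(Δ⊗id)Δ(1) = (1⊗Δ(1))(Δ(1)⊗1)` -/
  weak_comul_one₂ :
    (TensorProduct.map D.comul LinearMap.id) (D.comul D.one)
      = D.mul3 ((((TensorProduct.assoc k V V V).symm (D.one ⊗ₜ[k] D.comul D.one))) ⊗ₜ[k]
          (D.comul D.one ⊗ₜ[k] D.one))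
  /-- `ε(abc) = ε(ab₍₁₎)ε(b₍₂₎c)` -/
  weak_counit₁ : ∀ a b c : V,
    D.counit (D.mul (D.mul (a ⊗ₜ[k] b) ⊗ₜ[k] c))
      = (LinearMap.mul' k k) ((TensorProduct.map
          (D.counit ∘ₗ D.mul ∘ₗ TensorProduct.mk k V V a)
          (D.counit ∘ₗ D.mul ∘ₗ (TensorProduct.mk k V V).flip c)) (D.comul b))
  /-- `ε(abc) = ε(ab₍₂₎)ε(b₍₁₎c)` -/
  weak_counit₂ : ∀ a b c : V,
    D.counit (D.mul (D.mul (a ⊗ₜ[k] b) ⊗ₜ[k] c))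
      = (LinearMap.mul' k k) ((TensorProduct.map
          (D.counit ∘ₗ D.mul ∘ₗ TensorProduct.mk k V V a)
          (D.counit ∘ₗ D.mul ∘ₗ (TensorProduct.mk k V V).flip c))
          ((TensorProduct.comm k V V) (D.comul b)))
  /-- `h₍₁₎S(h₍₂₎) = ε(1₍₁₎h)1₍₂₎` -/
  antipode_right : ∀ h : V,
    D.mul ((TensorProduct.map LinearMap.id D.antipode) (D.comul h))
      = (TensorProduct.lid k V) ((TensorProduct.map D.counit LinearMap.id)
          (D.mul2 (D.comul D.one ⊗ₜ[k] (h ⊗ₜ[k] D.one))))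
  /-- `S(h₍₁₎)h₍₂₎ = ε(h1₍₂₎)1₍₁₎` -/
  antipode_left : ∀ h : V,
    D.mul ((TensorProduct.map D.antipode LinearMap.id) (D.comul h))
      = (TensorProduct.rid k V) ((TensorProduct.map LinearMap.id D.counit)
          (D.mul2 ((D.one ⊗ₜ[k] h) ⊗ₜ[k] D.comul D.one)))
  /-- `S(h₍₁₎)h₍₂₎S(h₍₃₎) = S(h)` -/
  antipode_mid : ∀ h : V,
    D.mul ((TensorProduct.map D.mul LinearMap.id)
      ((TensorProduct.map (TensorProduct.map D.antipode LinearMap.id) D.antipode)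
        ((TensorProduct.map D.comul LinearMap.id) (D.comul h))))
      = D.antipode h

variable [FiniteDimensional k V]

/-- The dual quantum groupoid data on `H* = Hom(H, k)`: product `⟨φψ, h⟩ = ⟨φ⊗ψ, Δ(h)⟩`,
coproduct `⟨Δ̂(φ), h⊗g⟩ = ⟨φ, hg⟩`, unit `ε`, counit `φ ↦ φ(1)`, antipode
`⟨Ŝ(φ), h⟩ = ⟨φ, S(h)⟩`. -/
noncomputable def dualData (D : QGData k V) : QGData k (Module.Dual k V) where
  mul := D.comul.dualMap ∘ₗ TensorProduct.dualDistrib k V V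
  one := D.counit
  comul := (TensorProduct.dualDistribEquiv k V V).symm.toLinearMap ∘ₗ D.mul.dualMap
  counit := LinearMap.applyₗ D.one
  antipode := D.antipode.dualMap

end QGData

namespace TensorProduct

open Module LinearMap

section Pairings

variable {R M N P Q M' N' P' : Type*} [CommSemiring R]
  [AddCommMonoid M] [Module R M] [AddCommMonoid N] [Module R N]
  [AddCommMonoid P] [Module R P] [AddCommMonoid Q] [Module R Q]
  [AddCommMonoid M'] [Module R M'] [AddCommMonoid N'] [Module R N']
  [AddCommMonoid P'] [Module R P']

variable (R M N P) in
noncomputable def dualDistrib₃ :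
    (Dual R M ⊗[R] Dual R N) ⊗[R] Dual R P →ₗ[R] Dual R ((M ⊗[R] N) ⊗[R] P) :=
  dualDistrib R (M ⊗[R] N) P ∘ₗ map (dualDistrib R M N) LinearMap.id

variable (R M N P) in
noncomputable def dualDistrib₃' :
    Dual R M ⊗[R] (Dual R N ⊗[R] Dual R P) →ₗ[R] Dual R (M ⊗[R] (N ⊗[R] P)) :=
  dualDistrib R M (N ⊗[R] P) ∘ₗ map LinearMap.id (dualDistrib R N P)

variable (R M N P Q) in
noncomputable def dualDistrib₄ :
    (Dual R M ⊗[R] Dual R N) ⊗[R] (Dual R P ⊗[R] Dual R Q) →ₗ[R]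
      Dual R ((M ⊗[R] N) ⊗[R] (P ⊗[R] Q)) :=
  dualDistrib R (M ⊗[R] N) (P ⊗[R] Q) ∘ₗ map (dualDistrib R M N) (dualDistrib R P Q)

@[simp]
theorem dualDistrib₃_tmul_apply (s : Dual R M ⊗[R] Dual R N) (γ : Dual R P) (u : M ⊗[R] N)
    (z : P) : dualDistrib₃ R M N P (s ⊗ₜ γ) (u ⊗ₜ z) = dualDistrib R M N s u * γ z :=
  rfl

@[simp]
theorem dualDistrib₃'_tmul_apply (α : Dual R M) (s : Dual R N ⊗[R] Dual R P) (x : M)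
    (u : N ⊗[R] P) : dualDistrib₃' R M N P (α ⊗ₜ s) (x ⊗ₜ u) = α x * dualDistrib R N P s u :=
  rfl

@[simp]
theorem dualDistrib₄_tmul_apply (s : Dual R M ⊗[R] Dual R N) (t : Dual R P ⊗[R] Dual R Q)
    (u : M ⊗[R] N) (v : P ⊗[R] Q) :
    dualDistrib₄ R M N P Q (s ⊗ₜ t) (u ⊗ₜ v) = dualDistrib R M N s u * dualDistrib R P Q t v :=
  rfl

theorem dualDistrib_map_dualMap (f : M →ₗ[R] M') (g : N →ₗ[R] N')
    (t : Dual R M' ⊗[R] Dual R N') :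
    dualDistrib R M N (map f.dualMap g.dualMap t) = dualDistrib R M' N' t ∘ₗ map f g := by
  induction t <;> [simp; (ext; simp); simp_all [add_comp]]

theorem dualDistrib₃_map_map_dualMap (f : M →ₗ[R] M') (g : N →ₗ[R] N') (h : P →ₗ[R] P')
    (t : (Dual R M' ⊗[R] Dual R N') ⊗[R] Dual R P') :
    dualDistrib₃ R M N P (map (map f.dualMap g.dualMap) h.dualMap t)
      = dualDistrib₃ R M' N' P' t ∘ₗ map (map f g) h := by
  induction t with
  | zero => simp
  | add => simp_all [add_comp]
  | tmul s γ => induction s <;> [simp; (ext; simp); simp_all [add_tmul, add_comp]]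

theorem dualDistrib₃'_assoc (t : (Dual R M ⊗[R] Dual R N) ⊗[R] Dual R P) :
    dualDistrib₃' R M N P (TensorProduct.assoc R _ _ _ t) ∘ₗ
        (TensorProduct.assoc R M N P).toLinearMap
      = dualDistrib₃ R M N P t := by
  induction t with
  | zero => simp
  | add => simp_all [add_comp]
  | tmul s γ => induction s <;> [simp; (ext; simp [mul_assoc]); simp_all [add_tmul, add_comp]]

theorem dualDistrib₄_tensorTensorTensorComm
    (t : (Dual R M ⊗[R] Dual R N) ⊗[R] (Dual R P ⊗[R] Dual R Q)) :
    dualDistrib₄ R M P N Q (tensorTensorTensorComm R _ _ _ _ t)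
      = dualDistrib₄ R M N P Q t ∘ₗ (tensorTensorTensorComm R M P N Q).toLinearMap := by
  induction t with
  | zero => simp
  | add => simp_all [add_comp]
  | tmul s t =>
    induction s with
    | zero => simp
    | add => simp_all [add_tmul, add_comp]
    | tmul a b =>
      induction t with
      | zero => simp
      | add => simp_all [tmul_add, add_comp]
      | tmul c d => ext; simp; ring

theorem dualDistrib_tmul_eq_comp_lid (f : Dual R M) (g : Dual R N) :
    dualDistrib R M N (f ⊗ₜ g)
      = g ∘ₗ (TensorProduct.lid R N).toLinearMap ∘ₗ map f LinearMap.id := by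
  ext; simp

theorem dualDistrib_tmul_eq_comp_rid (f : Dual R M) (g : Dual R N) :
    dualDistrib R M N (f ⊗ₜ g)
      = f ∘ₗ (TensorProduct.rid R M).toLinearMap ∘ₗ map LinearMap.id g := by
  ext; simp [mul_comm]

theorem lid_map_applyₗ_apply (x : M) (t : Dual R M ⊗[R] Dual R N) (y : N) :
    TensorProduct.lid R (Dual R N) (map (applyₗ x) LinearMap.id t) y
      = dualDistrib R M N t (x ⊗ₜ y) := by
  induction t <;> simp_all

theorem rid_map_applyₗ_apply (y : N) (t : Dual R M ⊗[R] Dual R N) (x : M) :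
    TensorProduct.rid R (Dual R M) (map LinearMap.id (applyₗ y) t) x
      = dualDistrib R M N t (x ⊗ₜ y) := by
  induction t <;> simp_all [mul_comm]

theorem mul'_map_dualDistrib_tmul_comp_mk (a : Dual R M) (b : Dual R N) (c : Dual R P)
    (d : Dual R Q) (x : M) (z : Q) (u : N ⊗[R] P) :
    mul' R R (map (dualDistrib R M N (a ⊗ₜ b) ∘ₗ TensorProduct.mk R M N x)
        (dualDistrib R P Q (c ⊗ₜ d) ∘ₗ (TensorProduct.mk R P Q).flip z) u)
      = a x * dualDistrib R N P (b ⊗ₜ c) u * d z := by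
  induction u <;> simp_all [mul_add, add_mul]; ring

theorem mul'_map_applyₗ_comp_dualDistrib_comp_mk (φ : Dual R M) (χ : Dual R Q)
    (W : Dual R N ⊗[R] Dual R P) (p : M) (q : N) (p' : P) (q' : Q) :
    mul' R R (map (applyₗ (p ⊗ₜ q) ∘ₗ dualDistrib R M N ∘ₗ TensorProduct.mk R _ _ φ)
        (applyₗ (p' ⊗ₜ q') ∘ₗ dualDistrib R P Q ∘ₗ (TensorProduct.mk R _ _).flip χ) W)
      = φ p * dualDistrib R N P W (q ⊗ₜ p') * χ q' := by
  induction W <;> simp_all [mul_add, add_mul]; ring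

end Pairings

section Injectivity

variable {R M N P : Type*} [CommRing R]
  [AddCommGroup M] [Module R M] [Module.Free R M] [Module.Finite R M]
  [AddCommGroup N] [Module R N] [Module.Free R N] [Module.Finite R N]
  [AddCommGroup P] [Module R P] [Module.Free R P] [Module.Finite R P]

theorem dualDistrib_injective : Function.Injective (dualDistrib R M N) :=
  (dualDistribEquiv R M N).injective

theorem dualDistrib₃_injective : Function.Injective (dualDistrib₃ R M N P) :=
  (dualDistribEquiv R (M ⊗[R] N) P).injective.comp
    (congr (dualDistribEquiv R M N) (LinearEquiv.refl R (Dual R P))).injective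

theorem dualDistrib₃'_injective : Function.Injective (dualDistrib₃' R M N P) :=
  (dualDistribEquiv R M (N ⊗[R] P)).injective.comp
    (congr (LinearEquiv.refl R (Dual R M)) (dualDistribEquiv R N P)).injective

end Injectivity

end TensorProduct

namespace QGData

open Module LinearMap

variable {k V : Type*} [Field k] [AddCommGroup V] [Module k V]

local notation "𝕍" => Module.Dual k V

variable {D : QGData k V}

theorem dualDistrib_counit_tmul_comul (hD : D.IsQG) (φ : 𝕍) (x : V) :
    dualDistrib k V V (D.counit ⊗ₜ φ) (D.comul x) = φ x := by
  simp [dualDistrib_tmul_eq_comp_lid, hD.counit_comul]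

theorem dualDistrib_tmul_counit_comul (hD : D.IsQG) (φ : 𝕍) (x : V) :
    dualDistrib k V V (φ ⊗ₜ D.counit) (D.comul x) = φ x := by
  simp [dualDistrib_tmul_eq_comp_rid, hD.comul_counit]

theorem lid_map_counit_comp_mul (hD : D.IsQG) (h : V) (U : V ⊗[k] V) :
    TensorProduct.lid k V
        (map ((D.counit ∘ₗ D.mul) ∘ₗ (TensorProduct.mk k V V).flip h) LinearMap.id U)
      = TensorProduct.lid k V (map D.counit LinearMap.id (D.mul2 (U ⊗ₜ (h ⊗ₜ D.one)))) := by
  induction U <;> simp_all [mul2, add_tmul, hD.mul_one]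

theorem rid_map_counit_comp_mul (hD : D.IsQG) (h : V) (U : V ⊗[k] V) :
    TensorProduct.rid k V
        (map LinearMap.id ((D.counit ∘ₗ D.mul) ∘ₗ TensorProduct.mk k V V h) U)
      = TensorProduct.rid k V (map LinearMap.id D.counit (D.mul2 ((D.one ⊗ₜ h) ⊗ₜ U))) := by
  induction U <;> simp_all [mul2, tmul_add, hD.one_mul]

theorem dualDistrib₄_tensorTensorTensorComm_tmul_counit (hD : D.IsQG) (φ : 𝕍) (h : V)
    (W : 𝕍 ⊗[k] 𝕍) (U : V ⊗[k] V) :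
    dualDistrib₄ k V V V V (tensorTensorTensorComm k 𝕍 𝕍 𝕍 𝕍 (W ⊗ₜ (φ ⊗ₜ D.counit)))
        (U ⊗ₜ D.comul h)
      = φ (TensorProduct.lid k V
          (map (dualDistrib k V V W ∘ₗ (TensorProduct.mk k V V).flip h) LinearMap.id U)) := by
  induction W with
  | zero => simp
  | add => simp_all [add_tmul, add_comp, map_add_left]
  | tmul a b =>
    induction U with
    | zero => simp
    | add => simp_all [add_tmul]
    | tmul p q => simp [dualDistrib_tmul_counit_comul hD, mul_comm, mul_left_comm]

theorem dualDistrib₄_tensorTensorTensorComm_counit_tmul (hD : D.IsQG) (φ : 𝕍) (h : V)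
    (W : 𝕍 ⊗[k] 𝕍) (U : V ⊗[k] V) :
    dualDistrib₄ k V V V V (tensorTensorTensorComm k 𝕍 𝕍 𝕍 𝕍 ((D.counit ⊗ₜ φ) ⊗ₜ W))
        (D.comul h ⊗ₜ U)
      = φ (TensorProduct.rid k V
          (map LinearMap.id (dualDistrib k V V W ∘ₗ TensorProduct.mk k V V h) U)) := by
  induction W with
  | zero => simp
  | add => simp_all [tmul_add, add_comp, map_add_right]
  | tmul a b =>
    induction U with
    | zero => simp
    | add => simp_all [tmul_add]
    | tmul p q => simp [dualDistrib_counit_tmul_comul hD, mul_comm, mul_left_comm]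

variable [FiniteDimensional k V]

@[simp]
theorem dualData_mul_apply (t : 𝕍 ⊗[k] 𝕍) (h : V) :
    D.dualData.mul t h = dualDistrib k V V t (D.comul h) :=
  rfl

theorem dualData_mul_eq (t : 𝕍 ⊗[k] 𝕍) : D.dualData.mul t = dualDistrib k V V t ∘ₗ D.comul :=
  rfl

@[simp]
theorem dualData_one : D.dualData.one = D.counit :=
  rfl

theorem dualData_counit : D.dualData.counit = applyₗ D.one :=
  rfl

@[simp]
theorem dualData_counit_apply (φ : 𝕍) : D.dualData.counit φ = φ D.one :=
  rfl

theorem dualData_counit_comp_mul_comp {M : Type*} [AddCommMonoid M] [Module k M]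
    (f : M →ₗ[k] 𝕍 ⊗[k] 𝕍) :
    D.dualData.counit ∘ₗ D.dualData.mul ∘ₗ f
      = applyₗ (D.comul D.one) ∘ₗ dualDistrib k V V ∘ₗ f :=
  rfl

@[simp]
theorem dualData_antipode : D.dualData.antipode = D.antipode.dualMap :=
  rfl

@[simp]
theorem dualDistrib_dualData_comul (φ : 𝕍) :
    dualDistrib k V V (D.dualData.comul φ) = φ ∘ₗ D.mul :=
  (dualDistribEquiv k V V).apply_symm_apply (D.mul.dualMap φ)

theorem dualDistrib_map_dualData_mul_id (w : (𝕍 ⊗[k] 𝕍) ⊗[k] 𝕍) :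
    dualDistrib k V V (map D.dualData.mul LinearMap.id w)
      = dualDistrib₃ k V V V w ∘ₗ map D.comul LinearMap.id := by
  induction w <;> [simp; (ext; simp); simp_all [add_comp]]

theorem dualDistrib_map_id_dualData_mul (w : 𝕍 ⊗[k] (𝕍 ⊗[k] 𝕍)) :
    dualDistrib k V V (map LinearMap.id D.dualData.mul w)
      = dualDistrib₃' k V V V w ∘ₗ map LinearMap.id D.comul := by
  induction w <;> [simp; (ext; simp); simp_all [add_comp]]

theorem dualDistrib₃_map_dualData_comul_id (t : 𝕍 ⊗[k] 𝕍) :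
    dualDistrib₃ k V V V (map D.dualData.comul LinearMap.id t)
      = dualDistrib k V V t ∘ₗ map D.mul LinearMap.id := by
  induction t <;> [simp; (ext; simp); simp_all [add_comp]]

theorem dualDistrib₃'_map_id_dualData_comul (t : 𝕍 ⊗[k] 𝕍) :
    dualDistrib₃' k V V V (map LinearMap.id D.dualData.comul t)
      = dualDistrib k V V t ∘ₗ map LinearMap.id D.mul := by
  induction t <;> [simp; (ext; simp); simp_all [add_comp]]

theorem dualDistrib₄_map_dualData_comul (t : 𝕍 ⊗[k] 𝕍) :
    dualDistrib₄ k V V V V (map D.dualData.comul D.dualData.comul t)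
      = dualDistrib k V V t ∘ₗ map D.mul D.mul := by
  induction t <;> [simp; (ext; simp); simp_all [add_comp]]

theorem dualDistrib_dualData_mul2 (X : (𝕍 ⊗[k] 𝕍) ⊗[k] (𝕍 ⊗[k] 𝕍)) :
    dualDistrib k V V (D.dualData.mul2 X)
      = dualDistrib₄ k V V V V (tensorTensorTensorComm k _ _ _ _ X) ∘ₗ map D.comul D.comul := by
  rw [mul2, LinearMap.comp_apply]
  generalize tensorTensorTensorComm k _ _ _ _ X = Y
  induction Y <;> [simp; (ext; simp); simp_all [add_comp]]

theorem dualData_mul_mul_apply (φ ψ χ : 𝕍) (h : V) :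
    D.dualData.mul (D.dualData.mul (φ ⊗ₜ ψ) ⊗ₜ χ) h
      = dualDistrib₃ k V V V ((φ ⊗ₜ ψ) ⊗ₜ χ) (map D.comul LinearMap.id (D.comul h)) :=
  DFunLike.congr_fun (dualDistrib_map_dualData_mul_id ((φ ⊗ₜ ψ) ⊗ₜ χ)) (D.comul h)

theorem dualData_mul_assoc (hD : D.IsQG) (φ ψ χ : 𝕍) :
    D.dualData.mul (D.dualData.mul (φ ⊗ₜ ψ) ⊗ₜ χ)
      = D.dualData.mul (φ ⊗ₜ D.dualData.mul (ψ ⊗ₜ χ)) := by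
  calc D.dualData.mul (map D.dualData.mul LinearMap.id ((φ ⊗ₜ ψ) ⊗ₜ χ))
      = dualDistrib₃' k V V V (φ ⊗ₜ (ψ ⊗ₜ χ)) ∘ₗ (TensorProduct.assoc k V V V).toLinearMap ∘ₗ
          map D.comul LinearMap.id ∘ₗ D.comul := by
        rw [dualData_mul_eq, dualDistrib_map_dualData_mul_id, ← dualDistrib₃'_assoc]; rfl
    _ = D.dualData.mul (map LinearMap.id D.dualData.mul (φ ⊗ₜ (ψ ⊗ₜ χ))) := by
        rw [hD.coassoc, dualData_mul_eq, dualDistrib_map_id_dualData_mul]; rfl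

theorem dualData_one_mul (hD : D.IsQG) (φ : 𝕍) : D.dualData.mul (D.dualData.one ⊗ₜ φ) = φ :=
  LinearMap.ext (dualDistrib_counit_tmul_comul hD φ)

theorem dualData_mul_one (hD : D.IsQG) (φ : 𝕍) : D.dualData.mul (φ ⊗ₜ D.dualData.one) = φ :=
  LinearMap.ext (dualDistrib_tmul_counit_comul hD φ)

theorem dualData_coassoc (hD : D.IsQG) :
    (TensorProduct.assoc k 𝕍 𝕍 𝕍).toLinearMap ∘ₗ map D.dualData.comul LinearMap.id ∘ₗ
        D.dualData.comul
      = map LinearMap.id D.dualData.comul ∘ₗ D.dualData.comul := by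
  ext φ : 1
  apply dualDistrib₃'_injective
  refine (LinearMap.cancel_right (TensorProduct.assoc k V V V).surjective).1 ?_
  simp only [comp_apply, LinearEquiv.coe_coe]
  rw [dualDistrib₃'_assoc, dualDistrib₃_map_dualData_comul_id,
    dualDistrib₃'_map_id_dualData_comul, dualDistrib_dualData_comul]
  ext x y z
  simp [hD.mul_assoc]

theorem dualData_counit_comul (hD : D.IsQG) (φ : 𝕍) :
    TensorProduct.lid k 𝕍 (map D.dualData.counit LinearMap.id (D.dualData.comul φ)) = φ := by
  ext h
  rw [dualData_counit, lid_map_applyₗ_apply, dualDistrib_dualData_comul, comp_apply, hD.one_mul]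

theorem dualData_comul_counit (hD : D.IsQG) (φ : 𝕍) :
    TensorProduct.rid k 𝕍 (map LinearMap.id D.dualData.counit (D.dualData.comul φ)) = φ := by
  ext h
  rw [dualData_counit, rid_map_applyₗ_apply, dualDistrib_dualData_comul, comp_apply, hD.mul_one]

theorem dualData_comul_mul (hD : D.IsQG) (φ ψ : 𝕍) :
    D.dualData.comul (D.dualData.mul (φ ⊗ₜ ψ))
      = D.dualData.mul2 (D.dualData.comul φ ⊗ₜ D.dualData.comul ψ) := by
  apply dualDistrib_injective
  rw [dualDistrib_dualData_mul2, dualDistrib₄_tensorTensorTensorComm, ← map_tmul,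
    dualDistrib₄_map_dualData_comul, dualDistrib_dualData_comul, dualData_mul_eq]
  ext x y
  simp [hD.comul_mul, mul2]

/-- In Sweedler notation the right side is `∑ W₁(x ⊗ y₍₁₎) W₂(y₍₂₎ ⊗ z)`. -/
theorem dualDistrib₃_dualData_mul3_counit_apply₁ (hD : D.IsQG) (W₁ W₂ : 𝕍 ⊗[k] 𝕍) (x y z : V) :
    dualDistrib₃ k V V V (D.dualData.mul3 ((W₁ ⊗ₜ D.counit) ⊗ₜ
        (TensorProduct.assoc k 𝕍 𝕍 𝕍).symm (D.counit ⊗ₜ W₂))) ((x ⊗ₜ y) ⊗ₜ z)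
      = mul' k k (map (dualDistrib k V V W₁ ∘ₗ TensorProduct.mk k V V x)
          (dualDistrib k V V W₂ ∘ₗ (TensorProduct.mk k V V).flip z) (D.comul y)) := by
  induction W₁ with
  | zero => simp
  | add => simp_all [add_tmul, add_comp, map_add_left]
  | tmul a b =>
    induction W₂ with
    | zero => simp
    | add => simp_all [tmul_add, add_comp, map_add_right]
    | tmul c d =>
      rw [mul'_map_dualDistrib_tmul_comp_mk]
      simp [mul3, mul2, dualDistrib_counit_tmul_comul hD, dualDistrib_tmul_counit_comul hD]

theorem dualDistrib₃_dualData_mul3_counit_apply₂ (hD : D.IsQG) (W₁ W₂ : 𝕍 ⊗[k] 𝕍) (x y z : V) :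
    dualDistrib₃ k V V V (D.dualData.mul3 ((TensorProduct.assoc k 𝕍 𝕍 𝕍).symm
        (D.counit ⊗ₜ W₂) ⊗ₜ (W₁ ⊗ₜ D.counit))) ((x ⊗ₜ y) ⊗ₜ z)
      = mul' k k (map (dualDistrib k V V W₁ ∘ₗ TensorProduct.mk k V V x)
          (dualDistrib k V V W₂ ∘ₗ (TensorProduct.mk k V V).flip z)
          (TensorProduct.comm k V V (D.comul y))) := by
  induction W₁ with
  | zero => simp
  | add => simp_all [add_tmul, tmul_add, add_comp, map_add_left]
  | tmul a b =>
    induction W₂ with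
    | zero => simp
    | add => simp_all [tmul_add, add_tmul, add_comp, map_add_right]
    | tmul c d =>
      rw [mul'_map_dualDistrib_tmul_comp_mk, dualDistrib_apply_comm]
      simp [mul3, mul2, dualDistrib_counit_tmul_comul hD, dualDistrib_tmul_counit_comul hD]

theorem dualData_weak_comul_one₁ (hD : D.IsQG) :
    map D.dualData.comul LinearMap.id (D.dualData.comul D.dualData.one)
      = D.dualData.mul3 ((D.dualData.comul D.dualData.one ⊗ₜ D.dualData.one) ⊗ₜ
          (TensorProduct.assoc k 𝕍 𝕍 𝕍).symm
            (D.dualData.one ⊗ₜ D.dualData.comul D.dualData.one)) := by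
  rw [dualData_one]
  refine dualDistrib₃_injective (ext_threefold fun x y z => ?_)
  rw [dualDistrib₃_dualData_mul3_counit_apply₁ hD, dualDistrib₃_map_dualData_comul_id,
    dualDistrib_dualData_comul]
  simp [hD.weak_counit₁, comp_assoc]

theorem dualData_weak_comul_one₂ (hD : D.IsQG) :
    map D.dualData.comul LinearMap.id (D.dualData.comul D.dualData.one)
      = D.dualData.mul3 ((TensorProduct.assoc k 𝕍 𝕍 𝕍).symm
          (D.dualData.one ⊗ₜ D.dualData.comul D.dualData.one) ⊗ₜ
            (D.dualData.comul D.dualData.one ⊗ₜ D.dualData.one)) := by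
  rw [dualData_one]
  refine dualDistrib₃_injective (ext_threefold fun x y z => ?_)
  rw [dualDistrib₃_dualData_mul3_counit_apply₂ hD, dualDistrib₃_map_dualData_comul_id,
    dualDistrib_dualData_comul]
  simp [hD.weak_counit₂, comp_assoc]

theorem dualDistrib₃_mul3_one_apply₁ (hD : D.IsQG) (φ ψ χ : 𝕍) (U₁ U₂ : V ⊗[k] V) :
    dualDistrib₃ k V V V ((φ ⊗ₜ ψ) ⊗ₜ χ)
        (D.mul3 ((U₁ ⊗ₜ D.one) ⊗ₜ (TensorProduct.assoc k V V V).symm (D.one ⊗ₜ U₂)))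
      = mul' k k (map (applyₗ U₁ ∘ₗ dualDistrib k V V ∘ₗ TensorProduct.mk k 𝕍 𝕍 φ)
          (applyₗ U₂ ∘ₗ dualDistrib k V V ∘ₗ (TensorProduct.mk k 𝕍 𝕍).flip χ)
          (D.dualData.comul ψ)) := by
  induction U₁ with
  | zero => simp
  | add => simp_all [add_tmul, add_comp, map_add_left]
  | tmul p q =>
    induction U₂ with
    | zero => simp
    | add => simp_all [tmul_add, add_comp, map_add_right]
    | tmul p' q' =>
      rw [mul'_map_applyₗ_comp_dualDistrib_comp_mk]
      simp [mul3, mul2, hD.one_mul, hD.mul_one]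

theorem dualDistrib₃_mul3_one_apply₂ (hD : D.IsQG) (φ ψ χ : 𝕍) (U₁ U₂ : V ⊗[k] V) :
    dualDistrib₃ k V V V ((φ ⊗ₜ ψ) ⊗ₜ χ)
        (D.mul3 ((TensorProduct.assoc k V V V).symm (D.one ⊗ₜ U₂) ⊗ₜ (U₁ ⊗ₜ D.one)))
      = mul' k k (map (applyₗ U₁ ∘ₗ dualDistrib k V V ∘ₗ TensorProduct.mk k 𝕍 𝕍 φ)
          (applyₗ U₂ ∘ₗ dualDistrib k V V ∘ₗ (TensorProduct.mk k 𝕍 𝕍).flip χ)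
          (TensorProduct.comm k 𝕍 𝕍 (D.dualData.comul ψ))) := by
  induction U₁ with
  | zero => simp
  | add => simp_all [add_tmul, tmul_add, add_comp, map_add_left]
  | tmul p q =>
    induction U₂ with
    | zero => simp
    | add => simp_all [tmul_add, add_tmul, add_comp, map_add_right]
    | tmul p' q' =>
      rw [mul'_map_applyₗ_comp_dualDistrib_comp_mk, ← dualDistrib_apply_comm]
      simp [mul3, mul2, hD.one_mul, hD.mul_one]

theorem dualData_weak_counit₁ (hD : D.IsQG) (φ ψ χ : 𝕍) :
    D.dualData.counit (D.dualData.mul (D.dualData.mul (φ ⊗ₜ ψ) ⊗ₜ χ))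
      = mul' k k (map (D.dualData.counit ∘ₗ D.dualData.mul ∘ₗ TensorProduct.mk k 𝕍 𝕍 φ)
          (D.dualData.counit ∘ₗ D.dualData.mul ∘ₗ (TensorProduct.mk k 𝕍 𝕍).flip χ)
          (D.dualData.comul ψ)) := by
  rw [dualData_counit_comp_mul_comp, dualData_counit_comp_mul_comp,
    ← dualDistrib₃_mul3_one_apply₁ hD, ← hD.weak_comul_one₁, dualData_counit_apply,
    dualData_mul_mul_apply]

theorem dualData_weak_counit₂ (hD : D.IsQG) (φ ψ χ : 𝕍) :
    D.dualData.counit (D.dualData.mul (D.dualData.mul (φ ⊗ₜ ψ) ⊗ₜ χ))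
      = mul' k k (map (D.dualData.counit ∘ₗ D.dualData.mul ∘ₗ TensorProduct.mk k 𝕍 𝕍 φ)
          (D.dualData.counit ∘ₗ D.dualData.mul ∘ₗ (TensorProduct.mk k 𝕍 𝕍).flip χ)
          (TensorProduct.comm k 𝕍 𝕍 (D.dualData.comul ψ))) := by
  rw [dualData_counit_comp_mul_comp, dualData_counit_comp_mul_comp,
    ← dualDistrib₃_mul3_one_apply₂ hD, ← hD.weak_comul_one₂, dualData_counit_apply,
    dualData_mul_mul_apply]

theorem dualData_antipode_right (hD : D.IsQG) (φ : 𝕍) :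
    D.dualData.mul (map LinearMap.id D.dualData.antipode (D.dualData.comul φ))
      = TensorProduct.lid k 𝕍 (map D.dualData.counit LinearMap.id
          (D.dualData.mul2 (D.dualData.comul D.dualData.one ⊗ₜ (φ ⊗ₜ D.dualData.one)))) := by
  ext h
  have hS := dualDistrib_map_dualMap LinearMap.id D.antipode (D.dualData.comul φ)
  rw [LinearMap.dualMap_id] at hS
  rw [dualData_mul_apply, dualData_antipode, hS, comp_apply, dualDistrib_dualData_comul,
    comp_apply, hD.antipode_right, dualData_counit, lid_map_applyₗ_apply, dualData_one,
    dualDistrib_dualData_mul2, comp_apply, map_tmul,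
    dualDistrib₄_tensorTensorTensorComm_tmul_counit hD, dualDistrib_dualData_comul,
    lid_map_counit_comp_mul hD]

theorem dualData_antipode_left (hD : D.IsQG) (φ : 𝕍) :
    D.dualData.mul (map D.dualData.antipode LinearMap.id (D.dualData.comul φ))
      = TensorProduct.rid k 𝕍 (map LinearMap.id D.dualData.counit
          (D.dualData.mul2 ((D.dualData.one ⊗ₜ φ) ⊗ₜ D.dualData.comul D.dualData.one))) := by
  ext h
  have hS := dualDistrib_map_dualMap D.antipode LinearMap.id (D.dualData.comul φ)
  rw [LinearMap.dualMap_id] at hS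
  rw [dualData_mul_apply, dualData_antipode, hS, comp_apply, dualDistrib_dualData_comul,
    comp_apply, hD.antipode_left, dualData_counit, rid_map_applyₗ_apply, dualData_one,
    dualDistrib_dualData_mul2, comp_apply, map_tmul,
    dualDistrib₄_tensorTensorTensorComm_counit_tmul hD, dualDistrib_dualData_comul,
    rid_map_counit_comp_mul hD]

theorem dualData_antipode_mid (hD : D.IsQG) (φ : 𝕍) :
    D.dualData.mul (map D.dualData.mul LinearMap.id
        (map (map D.dualData.antipode LinearMap.id) D.dualData.antipode
          (map D.dualData.comul LinearMap.id (D.dualData.comul φ))))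
      = D.dualData.antipode φ := by
  ext x
  have hS := dualDistrib₃_map_map_dualMap D.antipode LinearMap.id D.antipode
    (map D.dualData.comul LinearMap.id (D.dualData.comul φ))
  rw [LinearMap.dualMap_id] at hS
  rw [dualData_mul_apply, dualDistrib_map_dualData_mul_id, dualData_antipode, comp_apply, hS,
    comp_apply, dualDistrib₃_map_dualData_comul_id, comp_apply, dualDistrib_dualData_comul,
    comp_apply, hD.antipode_mid, dualMap_apply]

/-- the dual of a finite quantum groupoid, with the indicated structure maps,
is again a finite quantum groupoid. -/
theorem dual_isQG (D : QGData k V) (hD : D.IsQG) :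
    (D.dualData).IsQG
    ∧ (∀ (φ ψ : Module.Dual k V) (h : V),
        (D.dualData).mul (φ ⊗ₜ[k] ψ) h = TensorProduct.dualDistrib k V V (φ ⊗ₜ[k] ψ) (D.comul h))
    ∧ (∀ (φ : Module.Dual k V) (h g : V),
        TensorProduct.dualDistrib k V V ((D.dualData).comul φ) (h ⊗ₜ[k] g)
          = φ (D.mul (h ⊗ₜ[k] g)))
    ∧ ((D.dualData).one = D.counit)
    ∧ (∀ φ : Module.Dual k V, (D.dualData).counit φ = φ D.one)
    ∧ (∀ (φ : Module.Dual k V) (h : V), (D.dualData).antipode φ h = φ (D.antipode h)) :=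
  ⟨⟨dualData_mul_assoc hD, dualData_one_mul hD, dualData_mul_one hD, dualData_coassoc hD,
      dualData_counit_comul hD, dualData_comul_counit hD, dualData_comul_mul hD,
      dualData_weak_comul_one₁ hD, dualData_weak_comul_one₂ hD, dualData_weak_counit₁ hD,
      dualData_weak_counit₂ hD, dualData_antipode_right hD, dualData_antipode_left hD,
      dualData_antipode_mid hD⟩,
    fun φ ψ => dualData_mul_apply (φ ⊗ₜ ψ),
    fun φ _ _ => DFunLike.congr_fun (dualDistrib_dualData_comul φ) _, dualData_one,
    dualData_counit_apply, fun _ _ => rfl⟩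

end QGData
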